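/- arXiv:0903.2100 — 4 statements merged into one kernel-verified Lean document; each statement's English description precedes it below -/
import Mathlib

section
/- A set of partitions Q is dualising if and only if it is refining. -/
open Set

variable {E : Type*}

/-- A partition of `E`: pairwise disjoint nonempty parts covering `E`. -/
def IsPartitionOf (μ : Set (Set E)) : Prop :=
  (∀ A ∈ μ, A.Nonempty) ∧ μ.PairwiseDisjoint id ∧ ⋃₀ μ = Set.univ

/-- The least superset of `P` closed under merging of partitions:
from `(α|A)` and `(Aᶜ|β)` one obtains `(α|β)`. -/
inductive MergeClosure (P : Set (Set (Set E))) : Set (Set E) → Prop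
  | base {μ : Set (Set E)} : μ ∈ P → MergeClosure P μ
  | merge {α β : Set (Set E)} {A : Set E} (hA : A ∉ α) (hB : Aᶜ ∉ β) :
      MergeClosure P (insert A α) → MergeClosure P (insert Aᶜ β) →
      MergeClosure P (α ∪ β)

/-- A `Q`-bramble: pairwise intersecting sets meeting every partition in `Q`. -/
def IsBramble (Q : Set (Set (Set E))) (Br : Set (Set E)) : Prop :=
  (∀ X ∈ Br, ∀ Y ∈ Br, (X ∩ Y).Nonempty) ∧ ∀ μ ∈ Q, ∃ X ∈ μ, X ∈ Br

/-- Deletion: remove one element from one member, dropping it if it becomes empty. -/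
def DelStep (β α : Set (Set E)) : Prop :=
  ∃ B ∈ β, ∃ b ∈ B, α = (β \ {B}) ∪ {X | X = B \ {b} ∧ X.Nonempty}

/-- Partition step: replace one member by a partition of it. -/
def SplitStep (β α : Set (Set E)) : Prop :=
  ∃ B ∈ β, ∃ δ : Set (Set E), (∀ D ∈ δ, D.Nonempty) ∧ δ.PairwiseDisjoint id ∧
    ⋃₀ δ = B ∧ α = (β \ {B}) ∪ δ

/-- `α` is finer than `β`: obtained by a sequence of deletions and partitions. -/
def Finer (α β : Set (Set E)) : Prop :=
  Relation.ReflTransGen (fun x y => DelStep x y ∨ SplitStep x y) β α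

/-- `α` is strongly finer than `β`: obtained by deletions only. -/
def StronglyFiner (α β : Set (Set E)) : Prop :=
  Relation.ReflTransGen DelStep β α

/-- A family of small sets: downward closed. -/
def DownClosed (S : Set (Set E)) : Prop := ∀ X ∈ S, ∀ Y, Y ⊆ X → Y ∈ S

def Refining (Q : Set (Set (Set E))) : Prop :=
  ∀ (α β : Set (Set E)) (A B : Set E), A ∉ α → B ∉ β →
    insert A α ∈ Q → insert B β ∈ Q → A ∩ B = ∅ →
    ∃ μ ∈ Q, Finer μ (α ∪ β)

def Dualising (Q : Set (Set (Set E))) : Prop :=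
  ∀ S : Set (Set E), DownClosed S →
    (∃ μ ∈ Q, ∀ X ∈ μ, X ∈ S) ∨ (∃ Br, IsBramble Q Br ∧ ∀ X ∈ Br, X ∉ S)

/-- `α∖F`: remove the elements of `F` from every part, discarding emptied parts. -/
def RemoveF (α : Set (Set E)) (F : Set E) : Set (Set E) :=
  {X | ∃ A ∈ α, X = A \ F ∧ X.Nonempty}

def Pushing (P : Set (Set (Set E))) : Prop :=
  ∀ (α β : Set (Set E)) (A B : Set E), A ∉ α → B ∉ β →
    insert A α ∈ P → insert B β ∈ P → (Aᶜ ∩ Bᶜ).Nonempty →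
    ∃ F : Set E, F.Nonempty ∧ F ⊆ Aᶜ ∩ Bᶜ ∧
      (insert (A ∪ F) (RemoveF α F) ∈ P ∨ insert (B ∪ F) (RemoveF β F) ∈ P)

/-- Weakly submodular partition function (new sense). -/
def WeaklySubmodular (Ψ : Set (Set E) → EReal) : Prop :=
  ∀ (α β : Set (Set E)) (A B : Set E), A ∉ α → B ∉ β →
    IsPartitionOf (insert A α) → IsPartitionOf (insert B β) →
    (Aᶜ ∩ Bᶜ).Nonempty →
    ∃ F : Set E, F.Nonempty ∧ F ⊆ Aᶜ ∩ Bᶜ ∧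
      (Ψ (insert (A ∪ F) (RemoveF α F)) ≤ Ψ (insert A α) ∨
       Ψ (insert (B ∪ F) (RemoveF β F)) ≤ Ψ (insert B β))

/-- Submodular partition function. -/
def SubmodularPF (Ψ : Set (Set E) → EReal) : Prop :=
  ∀ (α β : Set (Set E)) (A B : Set E), A ∉ α → B ∉ β →
    IsPartitionOf (insert A α) → IsPartitionOf (insert B β) →
    Ψ (insert (A ∪ Bᶜ) (RemoveF α Bᶜ)) + Ψ (insert (B ∪ Aᶜ) (RemoveF β Aᶜ))
      ≤ Ψ (insert A α) + Ψ (insert B β)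

/-- The overlap: elements belonging to at least two members. -/
def Overlap (α : Set (Set E)) : Set E :=
  {x | ∃ X ∈ α, ∃ Y ∈ α, X ≠ Y ∧ x ∈ X ∧ x ∈ Y}

/-- A connectivity function: symmetric and submodular. -/
def ConnFn (f : Set E → EReal) : Prop :=
  (∀ X, f X = f Xᶜ) ∧ ∀ X Y, f (X ∪ Y) + f (X ∩ Y) ≤ f X + f Y

/-- The partition function `max_f`. -/
noncomputable def maxPF (f : Set E → EReal) (μ : Set (Set E)) : EReal := sSup (f '' μ)

/-!
If `Q` is dualising and `(α|A), (β|B) ∈ Q` with `A ∩ B = ∅`, take `S` to be the sets lying inside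
a part of `α ∪ β`. A bramble avoiding `S` would have to contain both `A` and `B`, so some `μ ∈ Q`
has all its parts in `S`, and such a `μ` is obtained from `α ∪ β` by splitting and deleting.

Conversely, if `Q` is refining, enlarge `S` to a maximal down-closed `T` containing no partition
of `Q`; the sets outside `T` form the bramble. By maximality every `X ∉ T` captures some `μ ∈ Q`,
i.e. each part of `μ` is in `T` or inside `X`. Let disjoint `X` and `V` both be captured, and `B`
be a part outside `T` of the `V`-witness. Refining `B` against the parts outside `T` of an
`X`-witness, one at a time, yields a partition captured by `V \ B`; as `V` shrinks, this ends
with a partition inside `T`.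
-/

theorem exists_superset_of_step {β α : Set (Set E)} (h : DelStep β α ∨ SplitStep β α) :
    ∀ P ∈ α, ∃ C ∈ β, P ⊆ C := by
  rcases h with ⟨B, hB, b, -, rfl⟩ | ⟨B, hB, δ, -, -, rfl, rfl⟩
  · rintro P (⟨hP, -⟩ | ⟨rfl, -⟩)
    exacts [⟨P, hP, subset_rfl⟩, ⟨B, hB, sdiff_subset⟩]
  · rintro P (⟨hP, -⟩ | hP)
    exacts [⟨P, hP, subset_rfl⟩, ⟨_, hB, subset_sUnion_of_mem hP⟩]

theorem Finer.exists_superset {α β : Set (Set E)} (h : Finer α β) :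
    ∀ P ∈ α, ∃ C ∈ β, P ⊆ C := by
  induction h with
  | refl => exact fun P hP => ⟨P, hP, subset_rfl⟩
  | tail _ hstep ih =>
    intro P hP
    obtain ⟨C, hC, hPC⟩ := exists_superset_of_step hstep P hP
    obtain ⟨D, hD, hCD⟩ := ih C hC
    exact ⟨D, hD, hPC.trans hCD⟩

theorem StronglyFiner.finer {α β : Set (Set E)} (h : StronglyFiner α β) : Finer α β :=
  Relation.ReflTransGen.mono (fun _ _ => Or.inl) _ _ h

theorem stronglyFiner_sdiff_singleton [Finite E] {γ : Set (Set E)} {B : Set E} (hB : B ∈ γ)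
    (hne : B.Nonempty) : StronglyFiner (γ \ {B}) γ := by
  induction B using WellFoundedLT.induction generalizing γ with
  | _ B ih =>
  obtain ⟨b, hb⟩ := hne
  by_cases hB' : (B \ {b}).Nonempty
  · have step : DelStep γ (insert (B \ {b}) (γ \ {B})) := by
      refine ⟨B, hB, b, hb, ?_⟩
      ext X
      simp only [mem_insert_iff, mem_union, mem_ofPred_eq]
      constructor
      · rintro (rfl | h)
        exacts [Or.inr ⟨rfl, hB'⟩, Or.inl h]
      · rintro (h | ⟨rfl, -⟩)
        exacts [Or.inr h, Or.inl rfl]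
    by_cases hmem : B \ {b} ∈ γ \ {B}
    · rw [insert_eq_of_mem hmem] at step
      exact .single step
    · have h := ih (B \ {b}) (sdiff_singleton_ssubset.2 hb) (mem_insert _ (γ \ {B})) hB'
      rw [insert_sdiff_self_of_notMem hmem] at h
      exact h.head step
  · refine .single ⟨B, hB, b, hb, ?_⟩
    ext X
    simp only [mem_union, mem_ofPred_eq]
    constructor
    · exact Or.inl
    · rintro (h | ⟨rfl, h⟩)
      exacts [h, (hB' h).elim]

theorem stronglyFiner_of_subset [Finite E] {μ γ : Set (Set E)} (hμγ : μ ⊆ γ)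
    (hγ : ∀ J ∈ γ, J.Nonempty) : StronglyFiner μ γ := by
  induction γ using WellFoundedLT.induction with
  | _ γ ih =>
  obtain rfl | ⟨J, hJγ, hJμ⟩ := hμγ.eq_or_ssubset.imp_right exists_of_ssubset
  · exact .refl
  · have hsub : μ ⊆ γ \ {J} := fun M hM => ⟨hμγ hM, by rintro rfl; exact hJμ hM⟩
    exact (stronglyFiner_sdiff_singleton hJγ (hγ J hJγ)).trans
      (ih _ (sdiff_singleton_ssubset.2 hJγ) hsub fun K hK => hγ K hK.1)

theorem splitStep_of_ssubset {γ : Set (Set E)} {C M : Set E} (hC : C ∈ γ) (hMC : M ⊂ C)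
    (hM : M.Nonempty) : SplitStep γ ((γ \ {C}) ∪ {M, C \ M}) := by
  refine ⟨C, hC, {M, C \ M}, ?_, ?_, ?_, rfl⟩
  · rintro D (rfl | rfl)
    exacts [hM, sdiff_nonempty.2 hMC.2]
  · exact (pairwiseDisjoint_singleton _ _).insert fun D hD _ => by
      rw [mem_singleton_iff.1 hD]; exact disjoint_sdiff_right
  · rw [sUnion_pair, union_sdiff_cancel hMC.1]

theorem finer_of_forall_exists_superset [Finite E] {μ γ : Set (Set E)}
    (hμd : μ.PairwiseDisjoint id) (hμ : ∀ M ∈ μ, M.Nonempty) (hγ : ∀ J ∈ γ, J.Nonempty)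
    (hsub : ∀ M ∈ μ, ∃ C ∈ γ, M ⊆ C) : Finer μ γ := by
  generalize hD : μ \ γ = D
  induction D using WellFoundedLT.induction generalizing γ with
  | _ D ih =>
  subst hD
  by_cases hμγ : μ ⊆ γ
  · exact (stronglyFiner_of_subset hμγ hγ).finer
  obtain ⟨M, hMμ, hMγ⟩ := not_subset.1 hμγ
  obtain ⟨C, hCγ, hMC⟩ := hsub M hMμ
  have hMC' : M ⊂ C := hMC.ssubset_of_ne (by rintro rfl; exact hMγ hCγ)
  have hCμ : C ∉ μ := fun hCμ =>
    hMC'.ne (hμd.elim_set hMμ hCμ _ (hμ M hMμ).some_mem (hMC (hμ M hMμ).some_mem))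
  refine .head (Or.inr (splitStep_of_ssubset hCγ hMC' (hμ M hMμ))) (ih _ ?_ ?_ ?_ rfl)
  · refine ssubset_of_subset_not_subset ?_ fun h => (h ⟨hMμ, hMγ⟩).2 (.inr (.inl rfl))
    rintro M' ⟨hM'μ, hM'⟩
    refine ⟨hM'μ, fun hM'γ => hM' (.inl ⟨hM'γ, ?_⟩)⟩
    rintro rfl
    exact hCμ hM'μ
  · rintro J (⟨hJ, -⟩ | hJ | hJ)
    · exact hγ J hJ
    · exact hJ ▸ hμ M hMμ
    · exact mem_singleton_iff.1 hJ ▸ sdiff_nonempty.2 hMC'.2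
  · intro M' hM'μ
    obtain ⟨C', hC'γ, hM'C'⟩ := hsub M' hM'μ
    by_cases hM' : M' = M
    · exact ⟨M', .inr (.inl hM'), subset_rfl⟩
    by_cases hC' : C' = C
    · subst hC'
      exact ⟨C' \ M, .inr (.inr rfl),
        subset_sdiff.2 ⟨hM'C', hμd hM'μ hMμ hM'⟩⟩
    · exact ⟨C', .inl ⟨hC'γ, hC'⟩, hM'C'⟩

theorem Dualising.refining [Finite E] {Q : Set (Set (Set E))}
    (hQ : ∀ μ ∈ Q, IsPartitionOf μ) (hD : Dualising Q) : Refining Q := by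
  intro α β A B _ _ hAQ hBQ hAB
  let S : Set (Set E) := {X | ∃ C ∈ α ∪ β, X ⊆ C}
  have hS : DownClosed S := fun X ⟨C, hC, hXC⟩ Y hYX => ⟨C, hC, hYX.trans hXC⟩
  rcases hD S hS with ⟨μ, hμQ, hμS⟩ | ⟨Br, ⟨hBr, hBrQ⟩, hBrS⟩
  · refine ⟨μ, hμQ, finer_of_forall_exists_superset (hQ μ hμQ).2.1 (hQ μ hμQ).1 ?_ hμS⟩
    rintro J (hJ | hJ)
    exacts [(hQ _ hAQ).1 J (mem_insert_of_mem _ hJ), (hQ _ hBQ).1 J (mem_insert_of_mem _ hJ)]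
  · have mem_bramble : ∀ {C γ}, insert C γ ∈ Q → γ ⊆ α ∪ β → C ∈ Br := by
      intro C γ hCγ hγ
      obtain ⟨X, hX | hX, hXBr⟩ := hBrQ _ hCγ
      · exact hX ▸ hXBr
      · exact (hBrS X hXBr ⟨X, hγ hX, subset_rfl⟩).elim
    have hA := mem_bramble hAQ subset_union_left
    have hB := mem_bramble hBQ subset_union_right
    exact ((hBr A hA B hB).ne_empty hAB).elim

theorem DownClosed.union_powerset {T : Set (Set E)} (hT : DownClosed T) (Z : Set E) :
    DownClosed (T ∪ 𝒫 Z) := by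
  rintro X (hX | hX) Y hYX
  exacts [.inl (hT X hX Y hYX), .inr (hYX.trans hX)]

theorem Set.PairwiseDisjoint.sdiff_singleton_subset_union_powerset {π T : Set (Set E)}
    {Z C : Set E} (hπ : π.PairwiseDisjoint id) (hπZ : π ⊆ T ∪ 𝒫 Z) (hC : C ∈ π) :
    π \ {C} ⊆ T ∪ 𝒫 (Z \ C) := fun _ ⟨hW, hWC⟩ =>
  (hπZ hW).imp_right fun hWZ => subset_sdiff.2 ⟨hWZ, hπ hW hC hWC⟩

namespace Refining

variable {Q : Set (Set (Set E))} {T : Set (Set E)}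

theorem exists_subset_union_powerset_sdiff (hQ : ∀ μ ∈ Q, IsPartitionOf μ) (hR : Refining Q)
    (hT : DownClosed T) {ρ ν : Set (Set E)} (hρ : ρ ∈ Q) (hν : ν ∈ Q) {A B U V : Set E}
    (hA : A ∈ ρ) (hB : B ∈ ν) (hAB : Disjoint A B) (hρU : ρ ⊆ T ∪ 𝒫 U) (hνV : ν ⊆ T ∪ 𝒫 V) :
    ∃ σ ∈ Q, σ ⊆ T ∪ 𝒫 ((U \ A) ∪ (V \ B)) := by
  have hAρ : insert A (ρ \ {A}) ∈ Q := by rwa [insert_sdiff_singleton, insert_eq_of_mem hA]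
  have hBν : insert B (ν \ {B}) ∈ Q := by rwa [insert_sdiff_singleton, insert_eq_of_mem hB]
  obtain ⟨σ, hσ, hσρν⟩ := hR (ρ \ {A}) (ν \ {B}) A B (fun h => h.2 rfl) (fun h => h.2 rfl)
    hAρ hBν (disjoint_iff_inter_eq_empty.1 hAB)
  refine ⟨σ, hσ, fun P hP => ?_⟩
  obtain ⟨W, hW, hPW⟩ := hσρν.exists_superset P hP
  refine hT.union_powerset _ W ?_ P hPW
  rcases hW with hW | hW
  · exact union_subset_union_right T (powerset_mono.2 subset_union_left)
      ((hQ ρ hρ).2.1.sdiff_singleton_subset_union_powerset hρU hA hW)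
  · exact union_subset_union_right T (powerset_mono.2 subset_union_right)
      ((hQ ν hν).2.1.sdiff_singleton_subset_union_powerset hνV hB hW)

variable [Finite E]

theorem exists_subset_union_powerset_sdiff_of_disjoint (hQ : ∀ μ ∈ Q, IsPartitionOf μ)
    (hR : Refining Q) (hT : DownClosed T) {ν : Set (Set E)} {V B W : Set E} (hν : ν ∈ Q)
    (hνV : ν ⊆ T ∪ 𝒫 V) (hB : B ∈ ν) (hBW : Disjoint B W) (hW : ∃ ρ ∈ Q, ρ ⊆ T ∪ 𝒫 W) :
    ∃ τ ∈ Q, τ ⊆ T ∪ 𝒫 (V \ B) := by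
  -- each refinement removes from `W \ V` a part of the witness outside `T` and `V`,
  -- adding only sets inside `V \ B`
  generalize hD : W \ V = D
  induction D using WellFoundedLT.induction generalizing W with
  | _ D ih =>
  subst hD
  obtain ⟨ρ, hρ, hρW⟩ := hW
  by_cases h : ∃ A ∈ ρ, A ∉ T ∧ ¬A ⊆ V
  · obtain ⟨A, hA, hAT, hAV⟩ := h
    have hAW : A ⊆ W := (hρW hA).resolve_left hAT
    obtain ⟨a, haA, haV⟩ := not_subset.1 hAV
    refine ih _ ?_ (disjoint_union_right.2 ⟨hBW.mono_right sdiff_subset, disjoint_sdiff_right⟩)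
      (hR.exists_subset_union_powerset_sdiff hQ hT hρ hν hA hB
        (hBW.mono_right hAW).symm hρW hνV) rfl
    refine ssubset_of_subset_not_subset ?_ fun h => ?_
    · rintro x ⟨hxW | hxV, hx⟩
      exacts [⟨hxW.1, hx⟩, (hx hxV.1).elim]
    · obtain ⟨haW | haV', -⟩ := h ⟨hAW haA, haV⟩
      exacts [haW.2 haA, haV haV'.1]
  · push Not at h
    refine ⟨ρ, hρ, fun P hP => or_iff_not_imp_left.2 fun hPT => ?_⟩
    have hPW : P ⊆ W := (hρW hP).resolve_left hPT
    exact subset_sdiff.2 ⟨h P hP hPT, (hBW.mono_right hPW).symm⟩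

theorem exists_subset_of_disjoint (hQ : ∀ μ ∈ Q, IsPartitionOf μ) (hR : Refining Q)
    (hT : DownClosed T) {X V : Set E} (hXV : Disjoint X V) (hX : ∃ μ ∈ Q, μ ⊆ T ∪ 𝒫 X)
    (hV : ∃ ν ∈ Q, ν ⊆ T ∪ 𝒫 V) : ∃ ρ ∈ Q, ρ ⊆ T := by
  induction V using WellFoundedLT.induction with
  | _ V ih =>
  obtain ⟨ν, hν, hνV⟩ := hV
  by_cases hνT : ν ⊆ T
  · exact ⟨ν, hν, hνT⟩
  obtain ⟨B, hB, hBT⟩ := not_subset.1 hνT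
  have hBV : B ⊆ V := (hνV hB).resolve_left hBT
  obtain ⟨b, hb⟩ := (hQ ν hν).1 B hB
  exact ih (V \ B) (sdiff_ssubset_left_iff.2 ⟨b, hBV hb, hb⟩) (hXV.mono_right sdiff_subset)
    (hR.exists_subset_union_powerset_sdiff_of_disjoint hQ hT hν hνV hB
      (hXV.mono_right hBV).symm hX)

theorem dualising (hQ : ∀ μ ∈ Q, IsPartitionOf μ) (hR : Refining Q) : Dualising Q := by
  intro S hS
  by_cases hSQ : ∃ μ ∈ Q, μ ⊆ S
  · exact .inl hSQ
  obtain ⟨T, hST, hT⟩ :=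
    (toFinite {T | DownClosed T ∧ ¬∃ μ ∈ Q, μ ⊆ T}).exists_le_maximal ⟨hS, hSQ⟩
  obtain ⟨hTd, hTQ⟩ := hT.prop
  have hcapture : ∀ X ∉ T, ∃ μ ∈ Q, μ ⊆ T ∪ 𝒫 X := fun X hX => by
    by_contra hXQ
    exact hX (hT.2 ⟨hTd.union_powerset X, hXQ⟩ subset_union_left
      (.inr (mem_powerset subset_rfl)))
  refine .inr ⟨Tᶜ, ⟨fun X hX Y hY => ?_, fun μ hμ => not_subset.1 fun hμT => hTQ ⟨μ, hμ, hμT⟩⟩,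
    fun X hX hXS => hX (hST hXS)⟩
  by_contra hXY
  rw [not_nonempty_iff_eq_empty, ← disjoint_iff_inter_eq_empty] at hXY
  exact hTQ (hR.exists_subset_of_disjoint hQ hTd hXY (hcapture X hX) (hcapture Y hY))

end Refining

/-- `Q` is dualising iff `Q` is refining. -/
theorem dualising_iff_refining [Finite E]
    (Q : Set (Set (Set E))) (hQ : ∀ μ ∈ Q, IsPartitionOf μ) :
    Dualising Q ↔ Refining Q :=
  ⟨fun hD => hD.refining hQ, fun hR => hR.dualising hQ⟩
end

section
/- If P is a pushing set of partitions, then P↑ is refining, and hence dualising. -/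
open Set

variable {E : Type*}

/-!
Pushing passes from `P` to `P↑`. To push a part `A ∈ δ` of the merge `γ ∪ δ` of `(C|γ)` and
`(Cᶜ|δ)` against `(B|β)`, push `A` inside `(Cᶜ|δ)` and then `C` inside `(C|γ)`, each time until
either `(B|β)` has been pushed or the part has absorbed all of `Bᶜ`; in the latter case the two
absorbed partitions merge along `C ∪ Bᶜ` into the push of `γ ∪ δ` by `Aᶜ ∩ Bᶜ`. Since the
absorbed partitions have merge depth no larger than the original ones, this is an induction on
the sum of the merge depths.

For disjoint parts `A`, `B`, pushing until `A ∪ B = E` and then merging gives a partition of `P↑`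
whose parts lie in parts of `α ∪ β`; such a partition `κ` is finer than `α ∪ β`: split every
part of `α ∪ β` along `κ`, then delete the superfluous pieces element by element.

Every refining family of partitions is dualising: take a maximal down-closed `T ⊇ S` containing
no partition of the family. Two disjoint sets outside `T` of least total size are then the only
parts outside `T` of two partitions of the family, and refining these produces a partition
inside `T`. So the sets outside `T` form a bramble.
-/

section Partition

variable {μ α β : Set (Set E)} {A X Y : Set E}

lemma notMem_of_forall_disjoint {s : Set (Set E)} (hA : A.Nonempty)
    (h : ∀ X ∈ s, Disjoint X A) : A ∉ s :=
  fun hAs => hA.ne_empty (disjoint_self.mp (h A hAs))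

namespace IsPartitionOf

lemma nonempty (h : IsPartitionOf μ) (hX : X ∈ μ) : X.Nonempty := h.1 X hX

lemma disjoint (h : IsPartitionOf μ) (hX : X ∈ μ) (hY : Y ∈ μ) (hXY : X ≠ Y) : Disjoint X Y :=
  h.2.1 hX hY hXY

lemma eq_of_subset (h : IsPartitionOf μ) (hX : X ∈ μ) (hY : Y ∈ μ) (hXY : X ⊆ Y) : X = Y := by
  by_contra hne
  exact (h.nonempty hX).ne_empty ((h.disjoint hX hY hne).eq_bot_of_le hXY)

lemma disjoint_of_mem_insert (h : IsPartitionOf (insert A α)) (hA : A ∉ α) (hX : X ∈ α) :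
    Disjoint X A :=
  h.disjoint (mem_insert_of_mem _ hX) (mem_insert _ _) (ne_of_mem_of_not_mem hX hA)

lemma subset_compl_of_mem_insert (h : IsPartitionOf (insert A α)) (hA : A ∉ α) (hX : X ∈ α) :
    X ⊆ Aᶜ :=
  (h.disjoint_of_mem_insert hA hX).subset_compl_right

lemma sUnion_eq_compl (h : IsPartitionOf (insert A α)) (hA : A ∉ α) : ⋃₀ α = Aᶜ := by
  refine Subset.antisymm (sUnion_subset fun X hX => h.subset_compl_of_mem_insert hA hX) ?_
  intro x hx
  have hcover : x ∈ A ∪ ⋃₀ α := by rw [← sUnion_insert, h.2.2]; trivial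
  exact hcover.resolve_left hx

lemma merge (h₁ : IsPartitionOf (insert A α)) (hA : A ∉ α)
    (h₂ : IsPartitionOf (insert Aᶜ β)) (hB : Aᶜ ∉ β) : IsPartitionOf (α ∪ β) := by
  have hβ : ∀ Y ∈ β, Y ⊆ A := fun Y hY => compl_compl A ▸ h₂.subset_compl_of_mem_insert hB hY
  refine ⟨?_, ?_, ?_⟩
  · rintro X (hX | hX)
    exacts [h₁.nonempty (mem_insert_of_mem _ hX), h₂.nonempty (mem_insert_of_mem _ hX)]
  · refine (h₁.2.1.subset (subset_insert _ _)).union (h₂.2.1.subset (subset_insert _ _)) ?_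
    exact fun X hX Y hY _ => (h₁.disjoint_of_mem_insert hA hX).mono_right (hβ Y hY)
  · rw [sUnion_union, h₁.sUnion_eq_compl hA, h₂.sUnion_eq_compl hB, compl_compl,
      compl_union_self]

end IsPartitionOf

end Partition

section RemoveF

variable {α β : Set (Set E)} {A C F G X : Set E}

lemma exists_superset_of_mem_removeF (h : X ∈ RemoveF α F) : ∃ D ∈ α, X ⊆ D := by
  obtain ⟨D, hD, rfl, -⟩ := h
  exact ⟨D, hD, sdiff_subset⟩

lemma nonempty_of_mem_removeF (h : X ∈ RemoveF α F) : X.Nonempty := by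
  obtain ⟨D, -, rfl, hne⟩ := h
  exact hne

lemma disjoint_of_mem_removeF (h : X ∈ RemoveF α F) : Disjoint X F := by
  obtain ⟨D, -, rfl, -⟩ := h
  exact disjoint_sdiff_left

lemma removeF_union : RemoveF (α ∪ β) F = RemoveF α F ∪ RemoveF β F := by
  ext X
  simp only [RemoveF, mem_union, mem_ofPred_eq, or_and_right, exists_or]

lemma removeF_singleton (h : (C \ F).Nonempty) : RemoveF {C} F = {C \ F} := by
  ext X
  simp only [RemoveF, mem_singleton_iff, mem_ofPred_eq, exists_eq_left]
  exact ⟨And.left, fun hX => ⟨hX, hX ▸ h⟩⟩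

lemma removeF_removeF : RemoveF (RemoveF α F) G = RemoveF α (F ∪ G) := by
  ext X
  constructor
  · rintro ⟨Y, ⟨D, hD, rfl, -⟩, rfl, hne⟩
    exact ⟨D, hD, sdiff_sdiff, hne⟩
  · rintro ⟨D, hD, rfl, hne⟩
    exact ⟨D \ F, ⟨D, hD, rfl, hne.mono (sdiff_subset_sdiff_right subset_union_left)⟩,
      sdiff_sdiff.symm, hne⟩

lemma removeF_eq_self (hne : ∀ X ∈ α, X.Nonempty) (h : ∀ X ∈ α, Disjoint X F) :
    RemoveF α F = α := by
  ext X
  constructor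
  · rintro ⟨D, hD, rfl, -⟩
    rwa [(h D hD).sdiff_eq_left]
  · exact fun hX => ⟨X, hX, (h X hX).sdiff_eq_left.symm, hne X hX⟩

lemma removeF_eq_empty (h : ∀ X ∈ α, X ⊆ F) : RemoveF α F = ∅ := by
  refine eq_empty_of_forall_notMem ?_
  rintro _ ⟨D, hD, rfl, hne⟩
  exact hne.ne_empty (sdiff_eq_empty.mpr (h D hD))

lemma removeF_inter_of_forall_subset {S T : Set E} (h : ∀ X ∈ α, X ⊆ S) :
    RemoveF α (S ∩ T) = RemoveF α T := by
  ext Y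
  refine exists_congr fun X => and_congr_right fun hX => ?_
  rw [sdiff_inter, sdiff_eq_empty.mpr (h X hX), empty_union]

lemma union_notMem_removeF (hA : A.Nonempty) (h : ∀ X ∈ α, Disjoint X A) :
    A ∪ F ∉ RemoveF α F := by
  refine notMem_of_forall_disjoint (hA.mono subset_union_left) fun Y hY => ?_
  obtain ⟨X, hX, rfl, -⟩ := hY
  exact disjoint_union_right.mpr ⟨(h X hX).mono_left sdiff_subset, disjoint_sdiff_left⟩

lemma union_inter_compl_insert_removeF (h : ∀ X ∈ α, X ⊆ Aᶜ) (B : Set E) :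
    insert (A ∪ (Aᶜ ∩ Bᶜ)) (RemoveF α (Aᶜ ∩ Bᶜ)) = insert (A ∪ Bᶜ) (RemoveF α Bᶜ) := by
  rw [union_inter_distrib_left, union_compl_self, univ_inter, removeF_inter_of_forall_subset h]

end RemoveF

lemma ncard_compl_union_inter_lt [Finite E] {A B F : Set E} (hF : F.Nonempty)
    (hFAB : F ⊆ Aᶜ ∩ Bᶜ) : ((A ∪ F)ᶜ ∩ Bᶜ).ncard < (Aᶜ ∩ Bᶜ).ncard := by
  refine ncard_lt_ncard ?_
  rw [compl_union, inter_right_comm, ← sdiff_eq]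
  exact sdiff_ssubset_left_iff.mpr (by rwa [inter_eq_right.mpr hFAB])

inductive MergeLevel (P : Set (Set (Set E))) : ℕ → Set (Set E) → Prop
  | base {n : ℕ} {μ : Set (Set E)} : μ ∈ P → MergeLevel P n μ
  | merge {n : ℕ} {α β : Set (Set E)} {A : Set E} : A ∉ α → Aᶜ ∉ β →
      MergeLevel P n (insert A α) → MergeLevel P n (insert Aᶜ β) → MergeLevel P (n + 1) (α ∪ β)

section MergeLevel

variable {P : Set (Set (Set E))} {μ : Set (Set E)} {m n : ℕ}

lemma MergeLevel.mono (h : MergeLevel P m μ) (hmn : m ≤ n) : MergeLevel P n μ := by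
  induction h generalizing n with
  | base hμ => exact base hμ
  | merge hA hB _ _ ih₁ ih₂ =>
    obtain ⟨n, rfl⟩ : ∃ k, n = k + 1 := ⟨n - 1, by omega⟩
    exact merge hA hB (ih₁ (by omega)) (ih₂ (by omega))

lemma MergeLevel.mergeClosure (h : MergeLevel P n μ) : MergeClosure P μ := by
  induction h with
  | base hμ => exact .base hμ
  | merge hA hB _ _ ih₁ ih₂ => exact .merge hA hB ih₁ ih₂

lemma MergeClosure.exists_mergeLevel (h : MergeClosure P μ) : ∃ n, MergeLevel P n μ := by
  induction h with
  | base hμ => exact ⟨0, .base hμ⟩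
  | merge hA hB _ _ ih₁ ih₂ =>
    obtain ⟨n₁, h₁⟩ := ih₁
    obtain ⟨n₂, h₂⟩ := ih₂
    exact ⟨max n₁ n₂ + 1, .merge hA hB (h₁.mono (le_max_left _ _)) (h₂.mono (le_max_right _ _))⟩

lemma MergeClosure.isPartitionOf (hP : ∀ μ ∈ P, IsPartitionOf μ) (h : MergeClosure P μ) :
    IsPartitionOf μ := by
  induction h with
  | base hμ => exact hP _ hμ
  | merge hA hB _ _ ih₁ ih₂ => exact ih₁.merge hA ih₂ hB

lemma MergeLevel.isPartitionOf (hP : ∀ μ ∈ P, IsPartitionOf μ) (h : MergeLevel P n μ) :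
    IsPartitionOf μ :=
  h.mergeClosure.isPartitionOf hP

end MergeLevel

def PushingPair (Q R : Set (Set (Set E))) : Prop :=
  ∀ (α β : Set (Set E)) (A B : Set E), A ∉ α → B ∉ β →
    insert A α ∈ Q → insert B β ∈ R → (Aᶜ ∩ Bᶜ).Nonempty →
    ∃ F : Set E, F.Nonempty ∧ F ⊆ Aᶜ ∩ Bᶜ ∧
      (insert (A ∪ F) (RemoveF α F) ∈ Q ∨ insert (B ∪ F) (RemoveF β F) ∈ R)

namespace PushingPair

variable {Q R : Set (Set (Set E))} {α β : Set (Set E)} {A B : Set E}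

lemma push_or_absorb [Finite E] (hQR : PushingPair Q R) (hQ : ∀ μ ∈ Q, IsPartitionOf μ)
    (hB : B ∉ β) (hν : insert B β ∈ R) (hA : A ∉ α) (hμ : insert A α ∈ Q) :
    (∃ F : Set E, F.Nonempty ∧ F ⊆ Aᶜ ∩ Bᶜ ∧ insert (B ∪ F) (RemoveF β F) ∈ R) ∨
      insert (A ∪ Bᶜ) (RemoveF α Bᶜ) ∈ Q := by
  induction hn : (Aᶜ ∩ Bᶜ).ncard using Nat.strong_induction_on generalizing A α with
  | _ n ih =>
  have hpart := hQ _ hμ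
  have hαA : ∀ X ∈ α, Disjoint X A := fun X hX => hpart.disjoint_of_mem_insert hA hX
  rcases (Aᶜ ∩ Bᶜ).eq_empty_or_nonempty with hreg | hreg
  · have hBA : Bᶜ ⊆ A := disjoint_compl_left_iff_subset.mp (disjoint_iff_inter_eq_empty.mpr hreg)
    right
    rwa [union_eq_left.mpr hBA, removeF_eq_self
      (fun X hX => hpart.nonempty (mem_insert_of_mem _ hX)) fun X hX => (hαA X hX).mono_right hBA]
  obtain ⟨F, hF, hFAB, hμF | hνF⟩ := hQR α β A B hA hB hμ hν hreg
  · have hAF : A ∪ F ∉ RemoveF α F := union_notMem_removeF (hpart.nonempty (mem_insert _ _)) hαA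
    rcases ih _ (hn ▸ ncard_compl_union_inter_lt hF hFAB) hAF hμF rfl with
      ⟨F', hF', hF'AB, hνF'⟩ | habsorb
    · refine .inl ⟨F', hF', hF'AB.trans ?_, hνF'⟩
      exact inter_subset_inter_left _ (compl_subset_compl.mpr subset_union_left)
    · right
      rwa [removeF_removeF, union_assoc, union_eq_right.mpr (hFAB.trans inter_subset_right)]
        at habsorb
  · exact .inl ⟨F, hF, hFAB, hνF⟩

end PushingPair

section PushMerge

variable {P R : Set (Set (Set E))} {m : ℕ} {γ δ β : Set (Set E)} {A B C : Set E}

lemma MergeLevel.merge_absorbed (hC : C.Nonempty) (hγC : ∀ X ∈ γ, Disjoint X C)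
    (hδC : ∀ X ∈ δ, X ⊆ C) (hAC : A ⊆ C) (hCB : (Cᶜ ∩ B).Nonempty)
    (hσ : MergeLevel P m (insert (C ∪ Bᶜ) (RemoveF γ Bᶜ)))
    (hρ : MergeLevel P m (insert (A ∪ Bᶜ) (RemoveF (insert Cᶜ δ) Bᶜ))) :
    MergeLevel P (m + 1) (insert (A ∪ Bᶜ) (RemoveF (γ ∪ δ) Bᶜ)) := by
  -- rewrite `hρ` as the partition `((C ∪ Bᶜ)ᶜ | A ∪ Bᶜ, δ ∖ Bᶜ)`
  rw [insert_eq Cᶜ, removeF_union, removeF_singleton (by rwa [Set.sdiff_compl]), Set.sdiff_compl,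
    singleton_union, insert_comm, ← compl_compl (Cᶜ ∩ B), compl_inter, compl_compl] at hρ
  have hσC : C ∪ Bᶜ ∉ RemoveF γ Bᶜ := union_notMem_removeF hC hγC
  have hρC : (C ∪ Bᶜ)ᶜ ∉ insert (A ∪ Bᶜ) (RemoveF δ Bᶜ) := by
    rw [compl_union, compl_compl]
    refine notMem_of_forall_disjoint hCB ?_
    rintro X (rfl | hX)
    · exact disjoint_union_left.mpr ⟨disjoint_compl_right.mono hAC inter_subset_left,
        disjoint_compl_left.mono_right inter_subset_right⟩
    · obtain ⟨D, hD, hXD⟩ := exists_superset_of_mem_removeF hX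
      exact disjoint_compl_right.mono (hXD.trans (hδC D hD)) inter_subset_left
  have hmerged := MergeLevel.merge hσC hρC hσ hρ
  rwa [union_insert, ← removeF_union] at hmerged

lemma mergeLevel_push_or_absorb [Finite E] (hP : ∀ μ ∈ P, IsPartitionOf μ)
    (hQR : PushingPair {μ | MergeLevel P m μ} R) (hCγ : C ∉ γ) (hCδ : Cᶜ ∉ δ)
    (h₁ : MergeLevel P m (insert C γ)) (h₂ : MergeLevel P m (insert Cᶜ δ)) (hA : A ∈ δ)
    (hB : B ∉ β) (hν : insert B β ∈ R) :
    (∃ F : Set E, F.Nonempty ∧ F ⊆ Aᶜ ∩ Bᶜ ∧ insert (B ∪ F) (RemoveF β F) ∈ R) ∨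
      MergeLevel P (m + 1) (insert (A ∪ Bᶜ) (RemoveF ((γ ∪ δ) \ {A}) Bᶜ)) := by
  have hQ : ∀ μ ∈ {μ | MergeLevel P m μ}, IsPartitionOf μ := fun μ h => h.isPartitionOf hP
  have p₁ := h₁.isPartitionOf hP
  have p₂ := h₂.isPartitionOf hP
  have hγC : ∀ X ∈ γ, Disjoint X C := fun X hX => p₁.disjoint_of_mem_insert hCγ hX
  have hδC : ∀ X ∈ δ, X ⊆ C := fun X hX =>
    compl_compl C ▸ p₂.subset_compl_of_mem_insert hCδ hX
  have hAne : A.Nonempty := p₂.nonempty (mem_insert_of_mem _ hA)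
  have hAC : A ⊆ C := hδC A hA
  have hAγ : A ∉ γ := fun h => hAne.ne_empty ((hγC A h).eq_bot_of_le hAC)
  have hAρ : A ∉ insert Cᶜ (δ \ {A}) := by
    rintro (rfl | h)
    · exact hAne.ne_empty (disjoint_compl_left.eq_bot_of_le hAC)
    · exact h.2 rfl
  have hρ₀ : insert A (insert Cᶜ (δ \ {A})) = insert Cᶜ δ := by
    rw [insert_comm, insert_sdiff_singleton, insert_eq_of_mem hA]
  rw [union_sdiff_distrib, sdiff_singleton_eq_self hAγ]
  rcases hQR.push_or_absorb hQ hB hν hAρ (hρ₀ ▸ h₂) with hνF | hρ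
  · exact .inl hνF
  rcases (Cᶜ ∩ B).eq_empty_or_nonempty with hCB | hCB
  -- if `Cᶜ ∩ B = ∅`, absorbing `Bᶜ ⊇ Cᶜ ⊇ ⋃₀ γ` into `A` has already produced the push
  · have hCB' : Cᶜ ⊆ Bᶜ :=
      subset_compl_iff_disjoint_right.mpr (disjoint_iff_inter_eq_empty.mpr hCB)
    rw [insert_eq Cᶜ, removeF_union, removeF_eq_empty (by rintro X rfl; exact hCB')] at hρ
    rw [removeF_union, removeF_eq_empty fun X hX => (hγC X hX).subset_compl_right.trans hCB']
    exact .inr (hρ.mono m.le_succ)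
  rcases hQR.push_or_absorb hQ hB hν hCγ h₁ with ⟨F, hF, hFCB, hνF⟩ | hσ
  · exact .inl ⟨F, hF, hFCB.trans (inter_subset_inter_left _ (compl_subset_compl.mpr hAC)), hνF⟩
  exact .inr (hσ.merge_absorbed (p₁.nonempty (mem_insert _ _)) hγC
    (fun X hX => hδC X hX.1) hAC hCB hρ)

end PushMerge

section PushingMergeClosure

variable {P R : Set (Set (Set E))}

lemma exists_push_of_merge [Finite E] (hP : ∀ μ ∈ P, IsPartitionOf μ) {m : ℕ}
    (hQR : PushingPair {μ | MergeLevel P m μ} R) {γ δ β : Set (Set E)} {A B C : Set E}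
    (hCγ : C ∉ γ) (hCδ : Cᶜ ∉ δ) (h₁ : MergeLevel P m (insert C γ))
    (h₂ : MergeLevel P m (insert Cᶜ δ)) (hA : A ∈ γ ∪ δ) (hB : B ∉ β) (hν : insert B β ∈ R)
    (hreg : (Aᶜ ∩ Bᶜ).Nonempty) :
    ∃ F : Set E, F.Nonempty ∧ F ⊆ Aᶜ ∩ Bᶜ ∧
      (MergeLevel P (m + 1) (insert (A ∪ F) (RemoveF ((γ ∪ δ) \ {A}) F)) ∨
        insert (B ∪ F) (RemoveF β F) ∈ R) := by
  have hpush_or_absorb : (∃ F : Set E, F.Nonempty ∧ F ⊆ Aᶜ ∩ Bᶜ ∧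
      insert (B ∪ F) (RemoveF β F) ∈ R) ∨
      MergeLevel P (m + 1) (insert (A ∪ Bᶜ) (RemoveF ((γ ∪ δ) \ {A}) Bᶜ)) := by
    rcases hA with hA | hA
    · rw [union_comm γ δ]
      exact mergeLevel_push_or_absorb hP hQR hCδ (by rwa [compl_compl]) h₂
        (by rwa [compl_compl]) hA hB hν
    · exact mergeLevel_push_or_absorb hP hQR hCγ hCδ h₁ h₂ hA hB hν
  rcases hpush_or_absorb with ⟨F, hF, hFAB, hνF⟩ | habsorb
  · exact ⟨F, hF, hFAB, .inr hνF⟩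
  refine ⟨Aᶜ ∩ Bᶜ, hreg, subset_rfl, .inl ?_⟩
  have hpart := (h₁.isPartitionOf hP).merge hCγ (h₂.isPartitionOf hP) hCδ
  have hAμ : insert A ((γ ∪ δ) \ {A}) = γ ∪ δ := by rw [insert_sdiff_singleton, insert_eq_of_mem hA]
  rwa [union_inter_compl_insert_removeF fun X hX =>
    (hAμ ▸ hpart).subset_compl_of_mem_insert (fun h => h.2 rfl) hX]

theorem pushingPair_mergeLevel [Finite E] (hP : ∀ μ ∈ P, IsPartitionOf μ) (hpush : Pushing P)
    (m n : ℕ) : PushingPair {μ | MergeLevel P m μ} {μ | MergeLevel P n μ} := by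
  induction hs : m + n using Nat.strong_induction_on generalizing m n with
  | _ s ih =>
  intro α β A B hA hB hμ hν hreg
  generalize hμA : insert A α = μ at hμ
  generalize hνB : insert B β = ν at hν
  cases hμ with
  | @merge m γ δ C hCγ hCδ h₁ h₂ =>
    obtain rfl : α = (γ ∪ δ) \ {A} := by rw [← hμA, insert_sdiff_self_of_notMem hA]
    subst hνB
    exact exists_push_of_merge hP (ih (m + n) (by omega) m n rfl) hCγ hCδ h₁ h₂
      (hμA ▸ mem_insert _ _) hB hν hreg
  | base hμP =>
  cases hν with
  | @merge n γ δ C hCγ hCδ h₁ h₂ =>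
    obtain rfl : β = (γ ∪ δ) \ {B} := by rw [← hνB, insert_sdiff_self_of_notMem hB]
    subst hμA
    obtain ⟨F, hF, hFAB, hpushed⟩ := exists_push_of_merge hP (ih (n + m) (by omega) n m rfl)
      hCγ hCδ h₁ h₂ (hνB ▸ mem_insert _ _) hA (.base hμP) (by rwa [inter_comm])
    exact ⟨F, hF, by rwa [inter_comm], hpushed.symm⟩
  | base hνP =>
    subst hμA hνB
    obtain ⟨F, hF, hFAB, hpushed⟩ := hpush α β A B hA hB hμP hνP hreg
    exact ⟨F, hF, hFAB, hpushed.imp .base .base⟩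

theorem Pushing.mergeClosure [Finite E] (hP : ∀ μ ∈ P, IsPartitionOf μ) (hpush : Pushing P) :
    Pushing {μ | MergeClosure P μ} := by
  intro α β A B hA hB hμ hν hreg
  obtain ⟨m, hm⟩ := MergeClosure.exists_mergeLevel hμ
  obtain ⟨n, hn⟩ := MergeClosure.exists_mergeLevel hν
  obtain ⟨F, hF, hFAB, hpushed⟩ := pushingPair_mergeLevel hP hpush m n α β A B hA hB hm hn hreg
  exact ⟨F, hF, hFAB, hpushed.imp MergeLevel.mergeClosure MergeLevel.mergeClosure⟩

end PushingMergeClosure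

section Finer

variable {ν γ Φ : Set (Set E)} {X D : Set E}

lemma stronglyFiner_insert [Finite E] (hX : X.Nonempty) (hXΦ : X ∉ Φ) :
    StronglyFiner Φ (insert X Φ) := by
  induction hn : X.ncard using Nat.strong_induction_on generalizing X with
  | _ n ih =>
  obtain ⟨b, hb⟩ := hX
  have hstep : DelStep (insert X Φ) (Φ ∪ {Z | Z = X \ {b} ∧ Z.Nonempty}) :=
    ⟨X, mem_insert _ _, b, hb, by rw [insert_sdiff_self_of_notMem hXΦ]⟩
  refine .head hstep ?_
  rcases (X \ {b}).eq_empty_or_nonempty with hempty | hne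
  · rw [union_eq_left.mpr (by rintro Z ⟨rfl, hZ⟩; exact absurd hempty hZ.ne_empty)]
  have hsingle : {Z | Z = X \ {b} ∧ Z.Nonempty} = {X \ {b}} :=
    ext fun Z => ⟨And.left, fun hZ => ⟨hZ, hZ ▸ hne⟩⟩
  rw [hsingle, union_singleton]
  by_cases hΦ : X \ {b} ∈ Φ
  · rw [insert_eq_of_mem hΦ]
  · exact ih _ (hn ▸ ncard_sdiff_singleton_lt_of_mem hb) hne hΦ rfl

lemma stronglyFiner_of_subset_s6 [Finite E] (hνΦ : ν ⊆ Φ) (hΦ : ∀ X ∈ Φ, X.Nonempty) :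
    StronglyFiner ν Φ := by
  induction hn : (Φ \ ν).ncard using Nat.strong_induction_on generalizing Φ with
  | _ n ih =>
  rcases (Φ \ ν).eq_empty_or_nonempty with hempty | ⟨X, hXΦ, hXν⟩
  · exact Subset.antisymm (sdiff_eq_empty.mp hempty) hνΦ ▸ .refl
  have hΦX : insert X (Φ \ {X}) = Φ := by rw [insert_sdiff_singleton, insert_eq_of_mem hXΦ]
  have hfirst : StronglyFiner (Φ \ {X}) Φ := by
    simpa only [hΦX] using stronglyFiner_insert (hΦ X hXΦ) fun h : X ∈ Φ \ {X} => h.2 rfl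
  refine Relation.ReflTransGen.trans hfirst (ih _ ?_ ?_ (fun Y hY => hΦ Y hY.1) rfl)
  · rw [← hn, sdiff_right_comm]
    exact ncard_sdiff_singleton_lt_of_mem ⟨hXΦ, hXν⟩
  · exact fun Y hY => ⟨hνΦ hY, fun h => hXν (h ▸ hY)⟩

lemma IsPartitionOf.splitStep (hν : IsPartitionOf ν) (hD : D ∈ γ) :
    SplitStep γ ((γ \ {D}) ∪ RemoveF ν Dᶜ) := by
  refine ⟨D, hD, RemoveF ν Dᶜ, fun X hX => nonempty_of_mem_removeF hX, ?_, ?_, rfl⟩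
  · rintro _ ⟨G, hG, rfl, -⟩ _ ⟨G', hG', rfl, -⟩ hne
    exact (hν.disjoint hG hG' fun h => hne (h ▸ rfl)).mono sdiff_subset sdiff_subset
  · refine Subset.antisymm (sUnion_subset fun X hX => ?_) fun x hx => ?_
    · exact compl_compl D ▸ (disjoint_of_mem_removeF hX).subset_compl_right
    · obtain ⟨G, hG, hxG⟩ : x ∈ ⋃₀ ν := hν.2.2 ▸ mem_univ x
      exact ⟨G \ Dᶜ, ⟨G, hG, rfl, ⟨x, hxG, not_not.mpr hx⟩⟩, hxG, not_not.mpr hx⟩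

/-- Split every part of `γ` not inside a part of `ν` along `ν`; afterwards `ν ⊆ γ`, and the
superfluous parts are deleted. -/
lemma finer_of_forall_subset [Finite E] (hν : IsPartitionOf ν) (hγ : ∀ D ∈ γ, D.Nonempty)
    (h : ∀ G ∈ ν, ∃ D ∈ γ, G ⊆ D) : Finer ν γ := by
  induction hn : {D ∈ γ | ∀ G ∈ ν, ¬D ⊆ G}.ncard using Nat.strong_induction_on
    generalizing γ with
  | _ n ih =>
  rcases {D ∈ γ | ∀ G ∈ ν, ¬D ⊆ G}.eq_empty_or_nonempty with hfine | ⟨D, hDγ, hD⟩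
  · have hνγ : ν ⊆ γ := by
      intro G hG
      obtain ⟨D, hDγ, hGD⟩ := h G hG
      obtain ⟨G', hG', hDG'⟩ : ∃ G' ∈ ν, D ⊆ G' := by
        by_contra! hcoarse
        exact (eq_empty_iff_forall_notMem.mp hfine) D ⟨hDγ, hcoarse⟩
      rwa [Subset.antisymm hGD (hν.eq_of_subset hG hG' (hGD.trans hDG') ▸ hDG')]
    exact Relation.ReflTransGen.mono (fun _ _ => Or.inl) _ _ (stronglyFiner_of_subset_s6 hνγ hγ)
  refine .head (Or.inr (hν.splitStep hDγ)) (ih _ ?_ ?_ ?_ rfl)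
  · refine hn ▸ (ncard_le_ncard ?_).trans_lt (ncard_sdiff_singleton_lt_of_mem ⟨hDγ, hD⟩)
    rintro D' ⟨hD' | hD', hcoarse⟩
    · exact ⟨⟨hD'.1, hcoarse⟩, hD'.2⟩
    · obtain ⟨G, hG, hD'G⟩ := exists_superset_of_mem_removeF hD'
      exact absurd hD'G (hcoarse G hG)
  · rintro D' (hD' | hD')
    exacts [hγ D' hD'.1, nonempty_of_mem_removeF hD']
  · intro G hG
    obtain ⟨D', hD'γ, hGD'⟩ := h G hG
    by_cases hD'D : D' = D
    · refine ⟨G, .inr ⟨G, hG, ?_, hν.nonempty hG⟩, subset_rfl⟩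
      rw [Set.sdiff_compl, inter_eq_left.mpr (hD'D ▸ hGD')]
    · exact ⟨D', .inl ⟨hD'γ, hD'D⟩, hGD'⟩

lemma Finer.exists_superset_s6 (h : Finer ν γ) : ∀ X ∈ ν, ∃ D ∈ γ, X ⊆ D := by
  induction h with
  | refl => exact fun X hX => ⟨X, hX, subset_rfl⟩
  | tail _ hstep ih =>
    intro X hX
    obtain ⟨Y, hY, hXY⟩ : ∃ Y, Y ∈ _ ∧ X ⊆ Y := by
      rcases hstep with ⟨B, hB, b, -, rfl⟩ | ⟨B, hB, δ, -, -, hδ, rfl⟩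
      · rcases hX with hX | ⟨rfl, -⟩
        exacts [⟨X, hX.1, subset_rfl⟩, ⟨B, hB, sdiff_subset⟩]
      · rcases hX with hX | hX
        exacts [⟨X, hX.1, subset_rfl⟩, ⟨B, hB, hδ ▸ subset_sUnion_of_mem hX⟩]
    obtain ⟨D, hD, hYD⟩ := ih Y hY
    exact ⟨D, hD, hXY.trans hYD⟩

end Finer

section Refining

variable {P : Set (Set (Set E))}

lemma exists_mergeClosure_forall_subset [Finite E] (hP : ∀ μ ∈ P, IsPartitionOf μ)
    (hpush : Pushing {μ | MergeClosure P μ}) {α β : Set (Set E)} {A B : Set E}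
    (hA : A ∉ α) (hB : B ∉ β) (hμ : MergeClosure P (insert A α))
    (hν : MergeClosure P (insert B β)) (hAB : Disjoint A B) :
    ∃ κ, MergeClosure P κ ∧ ∀ X ∈ κ, ∃ D ∈ α ∪ β, X ⊆ D := by
  induction hn : (Aᶜ ∩ Bᶜ).ncard using Nat.strong_induction_on generalizing A B α β with
  | _ n ih =>
  have pμ := hμ.isPartitionOf hP
  have pν := hν.isPartitionOf hP
  rcases (Aᶜ ∩ Bᶜ).eq_empty_or_nonempty with hreg | hreg
  · obtain rfl : B = Aᶜ := Subset.antisymm hAB.subset_compl_left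
      (disjoint_compl_left_iff_subset.mp (disjoint_iff_inter_eq_empty.mpr hreg).symm)
    exact ⟨α ∪ β, .merge hA hB hμ hν, fun X hX => ⟨X, hX, subset_rfl⟩⟩
  obtain ⟨F, hF, hFAB, hμF | hνF⟩ := hpush α β A B hA hB hμ hν hreg
  · obtain ⟨κ, hκ, hsub⟩ := ih _ (hn ▸ ncard_compl_union_inter_lt hF hFAB)
      (union_notMem_removeF (pμ.nonempty (mem_insert _ _))
        fun X hX => pμ.disjoint_of_mem_insert hA hX) hB hμF hν
      (disjoint_union_left.mpr ⟨hAB, subset_compl_iff_disjoint_right.mp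
        (hFAB.trans inter_subset_right)⟩) rfl
    refine ⟨κ, hκ, fun X hX => ?_⟩
    obtain ⟨D, hD | hD, hXD⟩ := hsub X hX
    · obtain ⟨D', hD', hDD'⟩ := exists_superset_of_mem_removeF hD
      exact ⟨D', .inl hD', hXD.trans hDD'⟩
    · exact ⟨D, .inr hD, hXD⟩
  · have hlt : (Aᶜ ∩ (B ∪ F)ᶜ).ncard < n := by
      rw [inter_comm, ← hn, inter_comm Aᶜ]
      exact ncard_compl_union_inter_lt hF (inter_comm Aᶜ Bᶜ ▸ hFAB)
    obtain ⟨κ, hκ, hsub⟩ := ih _ hlt hA (union_notMem_removeF (pν.nonempty (mem_insert _ _))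
        fun X hX => pν.disjoint_of_mem_insert hB hX) hμ hνF
      (disjoint_union_right.mpr ⟨hAB, subset_compl_iff_disjoint_left.mp
        (hFAB.trans inter_subset_left)⟩) rfl
    refine ⟨κ, hκ, fun X hX => ?_⟩
    obtain ⟨D, hD | hD, hXD⟩ := hsub X hX
    · exact ⟨D, .inl hD, hXD⟩
    · obtain ⟨D', hD', hDD'⟩ := exists_superset_of_mem_removeF hD
      exact ⟨D', .inr hD', hXD.trans hDD'⟩

theorem refining_mergeClosure [Finite E] (hP : ∀ μ ∈ P, IsPartitionOf μ) (hpush : Pushing P) :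
    Refining {μ | MergeClosure P μ} := by
  intro α β A B hA hB hμ hν hAB
  obtain ⟨κ, hκ, hsub⟩ := exists_mergeClosure_forall_subset hP (hpush.mergeClosure hP) hA hB
    hμ hν (disjoint_iff_inter_eq_empty.mpr hAB)
  refine ⟨κ, hκ, finer_of_forall_subset (hκ.isPartitionOf hP) ?_ hsub⟩
  rintro D (hD | hD)
  exacts [(hμ.isPartitionOf hP).nonempty (mem_insert_of_mem _ hD),
    (hν.isPartitionOf hP).nonempty (mem_insert_of_mem _ hD)]

end Refining

section Dualising

variable {Q : Set (Set (Set E))} {T : Set (Set E)}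

lemma exists_forall_mem_of_refining (href : Refining Q) (hT : DownClosed T)
    {μ ν : Set (Set E)} {A B : Set E} (hμ : μ ∈ Q) (hν : ν ∈ Q) (hA : A ∈ μ) (hB : B ∈ ν)
    (hμT : ∀ Z ∈ μ, Z ≠ A → Z ∈ T) (hνT : ∀ Z ∈ ν, Z ≠ B → Z ∈ T) (hAB : A ∩ B = ∅) :
    ∃ κ ∈ Q, ∀ Z ∈ κ, Z ∈ T := by
  have hμA : insert A (μ \ {A}) = μ := by rw [insert_sdiff_singleton, insert_eq_of_mem hA]
  have hνB : insert B (ν \ {B}) = ν := by rw [insert_sdiff_singleton, insert_eq_of_mem hB]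
  obtain ⟨κ, hκ, hfiner⟩ := href (μ \ {A}) (ν \ {B}) A B (fun h => h.2 rfl) (fun h => h.2 rfl)
    (by rwa [hμA]) (by rwa [hνB]) hAB
  refine ⟨κ, hκ, fun Z hZ => ?_⟩
  obtain ⟨D, hD | hD, hZD⟩ := hfiner.exists_superset_s6 Z hZ
  exacts [hT D (hμT D hD.1 hD.2) Z hZD, hT D (hνT D hD.1 hD.2) Z hZD]

lemma inter_nonempty_of_refining [Finite E] (hQ : ∀ μ ∈ Q, IsPartitionOf μ) (href : Refining Q)
    (hT : DownClosed T) (hTQ : ∀ μ ∈ Q, ∃ X ∈ μ, X ∉ T)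
    (hmax : ∀ X ∉ T, ∃ μ ∈ Q, ∀ Z ∈ μ, Z ∈ T ∨ Z ⊆ X) {X Y : Set E} (hX : X ∉ T)
    (hY : Y ∉ T) : (X ∩ Y).Nonempty := by
  induction hn : X.ncard + Y.ncard using Nat.strong_induction_on generalizing X Y with
  | _ n ih =>
  have hlarge : ∀ X ∉ T, ∃ μ ∈ Q, ∃ A ∈ μ, A ∉ T ∧ A ⊆ X ∧ ∀ Z ∈ μ, Z ∈ T ∨ Z ⊆ X := by
    intro X hX
    obtain ⟨μ, hμ, hμX⟩ := hmax X hX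
    obtain ⟨A, hA, hAT⟩ := hTQ μ hμ
    exact ⟨μ, hμ, A, hA, hAT, (hμX A hA).resolve_left hAT, hμX⟩
  obtain ⟨μ, hμ, A, hA, hAT, hAX, hμX⟩ := hlarge X hX
  obtain ⟨ν, hν, B, hB, hBT, hBY, hνY⟩ := hlarge Y hY
  by_contra hXY
  have hAB : A ∩ B = ∅ := subset_empty_iff.mp
    (not_nonempty_iff_eq_empty.mp hXY ▸ inter_subset_inter hAX hBY)
  have hAXY : A.ncard + B.ncard = n := by
    refine (hn ▸ add_le_add (ncard_le_ncard hAX) (ncard_le_ncard hBY)).antisymm ?_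
    by_contra! hlt
    exact (ih _ hlt hAT hBT rfl).ne_empty hAB
  obtain rfl : A = X := eq_of_subset_of_ncard_le hAX (by grind [ncard_le_ncard hBY])
  obtain rfl : B = Y := eq_of_subset_of_ncard_le hBY (by grind [ncard_le_ncard hAX])
  have hrest : ∀ {μ : Set (Set E)} {A : Set E}, IsPartitionOf μ → A ∈ μ →
      (∀ Z ∈ μ, Z ∈ T ∨ Z ⊆ A) → ∀ Z ∈ μ, Z ≠ A → Z ∈ T := fun hpart hA hμA Z hZ hZA =>
    (hμA Z hZ).resolve_right fun h => hZA (hpart.eq_of_subset hZ hA h)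
  obtain ⟨κ, hκ, hκT⟩ := exists_forall_mem_of_refining href hT hμ hν hA hB
    (hrest (hQ μ hμ) hA hμX) (hrest (hQ ν hν) hB hνY) hAB
  obtain ⟨Z, hZ, hZT⟩ := hTQ κ hκ
  exact hZT (hκT Z hZ)

theorem Refining.dualising_s6 [Finite E] (hQ : ∀ μ ∈ Q, IsPartitionOf μ) (href : Refining Q) :
    Dualising Q := by
  intro S hS
  by_cases hSQ : ∃ μ ∈ Q, ∀ X ∈ μ, X ∈ S
  · exact .inl hSQ
  push Not at hSQ
  obtain ⟨T, ⟨hT, hST, hTQ⟩, hTmax⟩ :=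
    Set.Finite.exists_maximal (s := {T | DownClosed T ∧ S ⊆ T ∧ ∀ μ ∈ Q, ∃ X ∈ μ, X ∉ T})
      (toFinite _) ⟨S, hS, subset_rfl, hSQ⟩
  have hmax : ∀ X ∉ T, ∃ μ ∈ Q, ∀ Z ∈ μ, Z ∈ T ∨ Z ⊆ X := by
    intro X hX
    by_contra! hnone
    have hdown : DownClosed (T ∪ 𝒫 X) := by
      rintro Z (hZ | hZ) W hWZ
      exacts [.inl (hT Z hZ W hWZ), .inr (hWZ.trans hZ)]
    refine hX (hTmax ⟨hdown, hST.trans subset_union_left, fun μ hμ => ?_⟩ subset_union_left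
      (.inr (mem_powerset subset_rfl)))
    obtain ⟨Z, hZ, hZT, hZX⟩ := hnone μ hμ
    exact ⟨Z, hZ, fun h => h.elim hZT hZX⟩
  exact .inr ⟨{X | X ∉ T}, ⟨fun X hX Y hY => inter_nonempty_of_refining hQ href hT hTQ hmax hX hY,
    hTQ⟩, fun X hX hXS => hX (hST hXS)⟩

end Dualising

/-- if `P` is pushing then `P↑` is refining, and hence dualising. -/
theorem pushing_refining_dualising [Finite E]
    (P : Set (Set (Set E))) (hP : ∀ μ ∈ P, IsPartitionOf μ) (hpush : Pushing P) :
    Refining {μ | MergeClosure P μ} ∧ Dualising {μ | MergeClosure P μ} :=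
  have href := refining_mergeClosure hP hpush
  ⟨href, href.dualising_s6 fun _ hμ => MergeClosure.isPartitionOf hP hμ⟩
end

section
/- If Ψ is a submodular partition function on a finite set E, then for every real k, the set P_k of partitions μ with Ψ(μ) ≤ k is pushing. -/
open Set

variable {E : Type*}

/-!
Push `F = Aᶜ ∩ Bᶜ`. For a partition `(α|A)`, pushing `Bᶜ` and pushing `Aᶜ ∩ Bᶜ` give the same
partition, since the parts of `α` lie in `Aᶜ`. Submodularity then bounds the sum of the values
of the two pushed partitions by `Ψ(α|A) + Ψ(B|β) ≤ 2k`, so one of them has value at most `k`.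
-/

theorem EReal.le_or_le_of_add_le_add {a b c d : EReal} (h : a + b ≤ c + d) : a ≤ c ∨ b ≤ d := by
  by_contra! hlt
  exact (EReal.add_lt_add hlt.1 hlt.2).not_ge h

namespace RemoveF

theorem sUnion (α : Set (Set E)) (F : Set E) : ⋃₀ RemoveF α F = ⋃₀ α \ F := by
  ext x
  simp only [RemoveF, mem_sUnion, mem_ofPred_eq, mem_sdiff]
  constructor
  · rintro ⟨_, ⟨X, hX, rfl, -⟩, hxX, hxF⟩
    exact ⟨⟨X, hX, hxX⟩, hxF⟩
  · rintro ⟨⟨X, hX, hxX⟩, hxF⟩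
    exact ⟨X \ F, ⟨X, hX, rfl, x, hxX, hxF⟩, hxX, hxF⟩

theorem pairwiseDisjoint {α : Set (Set E)} (hα : α.PairwiseDisjoint id) (F : Set E) :
    (RemoveF α F).PairwiseDisjoint id := by
  rintro _ ⟨X, hX, rfl, -⟩ _ ⟨Y, hY, rfl, -⟩ hXY
  have hne : X ≠ Y := by rintro rfl; exact hXY rfl
  exact (hα hX hY hne).mono sdiff_subset sdiff_subset

theorem inter_eq {α : Set (Set E)} {C : Set E} (hα : ∀ X ∈ α, X ⊆ C) (F : Set E) :
    RemoveF α (C ∩ F) = RemoveF α F := by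
  have hdiff : ∀ X ∈ α, X \ (C ∩ F) = X \ F := fun X hX => by
    rw [sdiff_inter, sdiff_eq_empty.mpr (hα X hX), empty_union]
  ext Y
  simp only [RemoveF, mem_ofPred_eq]
  constructor
  · rintro ⟨X, hX, rfl, hne⟩
    exact ⟨X, hX, hdiff X hX, hdiff X hX ▸ hne⟩
  · rintro ⟨X, hX, rfl, hne⟩
    exact ⟨X, hX, (hdiff X hX).symm, hdiff X hX ▸ hne⟩

end RemoveF

namespace IsPartitionOf

variable {A : Set E} {α : Set (Set E)}

theorem subset_compl (hA : A ∉ α) (hp : IsPartitionOf (insert A α)) : ∀ X ∈ α, X ⊆ Aᶜ :=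
  fun X hX => subset_compl_iff_disjoint_left.mpr <|
    hp.2.1 (mem_insert A α) (mem_insert_of_mem A hX) (by rintro rfl; exact hA hX)

theorem push (hA : A ∉ α) (hp : IsPartitionOf (insert A α)) (F : Set E) :
    IsPartitionOf (insert (A ∪ F) (RemoveF α F)) := by
  have hα := hp.subset_compl hA
  obtain ⟨hne, hdisj, hcov⟩ := hp
  refine ⟨?_, ?_, ?_⟩
  · rintro _ (rfl | ⟨X, -, rfl, hX⟩)
    · exact (hne A (mem_insert A α)).mono subset_union_left
    · exact hX
  · refine (RemoveF.pairwiseDisjoint (pairwiseDisjoint_insert.mp hdisj).1 F).insert ?_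
    rintro _ ⟨X, hX, rfl, -⟩ -
    exact disjoint_union_left.mpr
      ⟨(subset_compl_iff_disjoint_left.mp (hα X hX)).mono_right sdiff_subset,
        disjoint_sdiff_right⟩
  · rw [sUnion_insert, RemoveF.sUnion, union_assoc, union_sdiff_self, ← union_assoc,
      union_right_comm, ← sUnion_insert, hcov, univ_union]

theorem push_compl_eq (hA : A ∉ α) (hp : IsPartitionOf (insert A α)) (B : Set E) :
    insert (A ∪ Bᶜ) (RemoveF α Bᶜ) = insert (A ∪ (Aᶜ ∩ Bᶜ)) (RemoveF α (Aᶜ ∩ Bᶜ)) := by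
  rw [RemoveF.inter_eq (hp.subset_compl hA), union_inter_distrib_left, union_compl_self,
    univ_inter]

end IsPartitionOf

theorem submodular_pushing_general
    (Ψ : Set (Set E) → EReal) (hΨ : SubmodularPF Ψ) (k : ℝ) :
    Pushing {μ | IsPartitionOf μ ∧ Ψ μ ≤ (k : EReal)} := by
  rintro α β A B hA hB ⟨hpα, hΨα⟩ ⟨hpβ, hΨβ⟩ hne
  refine ⟨Aᶜ ∩ Bᶜ, hne, Subset.rfl, ?_⟩
  have hsub := (hΨ α β A B hA hB hpα hpβ).trans (add_le_add hΨα hΨβ)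
  rw [hpα.push_compl_eq hA, hpβ.push_compl_eq hB, inter_comm Bᶜ] at hsub
  rcases EReal.le_or_le_of_add_le_add hsub with h | h
  · exact Or.inl ⟨hpα.push hA _, h⟩
  · exact Or.inr ⟨hpβ.push hB _, h⟩

/-- if `Ψ` is a submodular partition function then for every real
`k` the set `P_k` of partitions of value at most `k` is pushing. -/
theorem submodular_pushing [Finite E]
    (Ψ : Set (Set E) → EReal) (hΨ : SubmodularPF Ψ) (k : ℝ) :
    Pushing {μ | IsPartitionOf μ ∧ Ψ μ ≤ (k : EReal)} :=
  submodular_pushing_general Ψ hΨ k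
end

section
/- Let f be a connectivity function on a finite set E, and let A, B ⊆ E with A^c ∩ B^c ≠ ∅ and let F minimize f over sets with A∖B ⊆ F ⊆ (B∖A)^c. Then at least one of F ∩ (A^c ∩ B^c) and F^c ∩ (A^c ∩ B^c) is nonempty, and furthermore (α∖F|A∪F) = (α∖F_A|A∪F_A) where F_A = F ∩ A^c ∩ B^c, for any partition (α|A). -/
open Set

variable {E : Type*}

/-! Since `F` avoids `B \ A`, every element of `F` outside `Aᶜ ∩ Bᶜ` lies in `A`. Such elements are
absorbed by `A ∪ ·`, and they are invisible to the parts of `α`, which are disjoint from `A`. -/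

namespace Set

variable {A C F X : Set E}

theorem union_inter_eq_union_of_subset_union (h : F ⊆ A ∪ C) : A ∪ F ∩ C = A ∪ F := by
  rw [union_inter_distrib_left, inter_eq_left.mpr (union_subset subset_union_left h)]

theorem diff_inter_eq_diff_of_subset_union (h : F ⊆ A ∪ C) (hX : Disjoint X A) :
    X \ (F ∩ C) = X \ F := by
  refine subset_antisymm (fun x ⟨hxX, hxFC⟩ ↦ ⟨hxX, fun hxF ↦ hxFC ⟨hxF, ?_⟩⟩)
    (sdiff_subset_sdiff_right inter_subset_left)
  exact (h hxF).resolve_left (hX.notMem_of_mem_left hxX)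

theorem Nonempty.inter_or_compl_inter {s : Set E} (hs : s.Nonempty) (t : Set E) :
    (t ∩ s).Nonempty ∨ (tᶜ ∩ s).Nonempty := by
  obtain ⟨x, hx⟩ := hs
  by_cases hxt : x ∈ t
  exacts [Or.inl ⟨x, hxt, hx⟩, Or.inr ⟨x, hxt, hx⟩]

theorem PairwiseDisjoint.disjoint_of_mem_of_notMem {α : Set (Set E)}
    (h : (insert A α).PairwiseDisjoint id) (hA : A ∉ α) (hX : X ∈ α) : Disjoint X A :=
  h (mem_insert_of_mem A hX) (mem_insert A α) (ne_of_mem_of_not_mem hX hA)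

end Set

theorem RemoveF_congr {α : Set (Set E)} {F G : Set E} (h : ∀ X ∈ α, X \ F = X \ G) :
    RemoveF α F = RemoveF α G := by
  ext Y
  constructor <;> rintro ⟨X, hX, rfl, hne⟩
  · exact ⟨X, hX, h X hX, h X hX ▸ hne⟩
  · exact ⟨X, hX, (h X hX).symm, (h X hX).symm ▸ hne⟩

theorem restrict_to_overlap_general
    (A B F : Set E) (hov : (Aᶜ ∩ Bᶜ).Nonempty)
    (hF2 : F ⊆ (B \ A)ᶜ) :
    ((F ∩ (Aᶜ ∩ Bᶜ)).Nonempty ∨ (Fᶜ ∩ (Aᶜ ∩ Bᶜ)).Nonempty) ∧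
    ∀ α : Set (Set E), A ∉ α → IsPartitionOf (insert A α) →
      insert (A ∪ F) (RemoveF α F) =
        insert (A ∪ (F ∩ (Aᶜ ∩ Bᶜ))) (RemoveF α (F ∩ (Aᶜ ∩ Bᶜ))) := by
  have hF : F ⊆ A ∪ (Aᶜ ∩ Bᶜ) := by
    rwa [union_inter_distrib_left, union_compl_self, univ_inter, ← compl_sdiff]
  refine ⟨hov.inter_or_compl_inter F, fun α hA hα ↦ ?_⟩
  have hdisj : ∀ X ∈ α, Disjoint X A := fun X ↦ hα.2.1.disjoint_of_mem_of_notMem hA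
  rw [union_inter_eq_union_of_subset_union hF,
    RemoveF_congr fun X hX ↦ (diff_inter_eq_diff_of_subset_union hF (hdisj X hX)).symm]

/-- with `F` minimizing `f` among `A∖B ⊆ F ⊆ (B∖A)ᶜ` and
`Aᶜ ∩ Bᶜ ≠ ∅`, at least one of `F ∩ (Aᶜ∩Bᶜ)` and `Fᶜ ∩ (Aᶜ∩Bᶜ)` is nonempty,
and `(α∖F|A∪F) = (α∖F_A|A∪F_A)` with `F_A = F ∩ Aᶜ ∩ Bᶜ`. -/
theorem restrict_to_overlap [Finite E]
    (f : Set E → EReal) (hf : ConnFn f)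
    (A B F : Set E) (hov : (Aᶜ ∩ Bᶜ).Nonempty)
    (hF1 : A \ B ⊆ F) (hF2 : F ⊆ (B \ A)ᶜ)
    (hmin : ∀ G, A \ B ⊆ G → G ⊆ (B \ A)ᶜ → f F ≤ f G) :
    ((F ∩ (Aᶜ ∩ Bᶜ)).Nonempty ∨ (Fᶜ ∩ (Aᶜ ∩ Bᶜ)).Nonempty) ∧
    ∀ α : Set (Set E), A ∉ α → IsPartitionOf (insert A α) →
      insert (A ∪ F) (RemoveF α F) =
        insert (A ∪ (F ∩ (Aᶜ ∩ Bᶜ))) (RemoveF α (F ∩ (Aᶜ ∩ Bᶜ))) :=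
  restrict_to_overlap_general A B F hov hF2
end
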